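/- Let σ : Λ → ℂ be conjugate-symmetric and Ψ : Z_N² → ℝ strictly positive, and suppose the grid is fine enough that the only conjugate-symmetric q : Λ → ℂ with Q(ζ_ℓ) = 0 for all ℓ ∈ Z_N² is q = 0. Then there is at most one q̂ ∈ ℒ₊ such that Φ̂(ℓ) = 1/(1/Ψ(ℓ) + Q̂(ζ_ℓ)) satisfies the moment equations for σ. -/

import Mathlib

open Complex BigOperators

noncomputable section

/-- The index set `Λ = {k ∈ ℤ² : |k₁| ≤ n₁, |k₂| ≤ n₂}`. -/
def Lam (n₁ n₂ : ℕ) : Finset (ℤ × ℤ) :=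
  Finset.Icc (-(n₁ : ℤ)) (n₁ : ℤ) ×ˢ Finset.Icc (-(n₂ : ℤ)) (n₂ : ℤ)

/-- The discrete grid `Z_N² = {0,…,N₁−1} × {0,…,N₂−1}`. -/
def gridN (N₁ N₂ : ℕ) : Finset (ℕ × ℕ) := Finset.range N₁ ×ˢ Finset.range N₂

/-- The grid point `ζ_ℓ = (2πℓ₁/N₁, 2πℓ₂/N₂)`. -/
def zeta (N₁ N₂ : ℕ) (ℓ : ℕ × ℕ) : ℝ × ℝ :=
  (2 * Real.pi * ℓ.1 / N₁, 2 * Real.pi * ℓ.2 / N₂)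

/-- Conjugate symmetry of coefficients: `q₋ₖ = conj qₖ` for all `k ∈ Λ`. -/
def ConjSym (n₁ n₂ : ℕ) (q : ℤ × ℤ → ℂ) : Prop :=
  ∀ k ∈ Lam n₁ n₂, q (-k) = starRingEnd ℂ (q k)

/-- The trigonometric polynomial `Q(θ) = Σ_{k∈Λ} qₖ exp(−i(k₁θ₁ + k₂θ₂))`. -/
def trigQ (n₁ n₂ : ℕ) (q : ℤ × ℤ → ℂ) (θ : ℝ × ℝ) : ℂ :=
  ∑ k ∈ Lam n₁ n₂, q k *
    Complex.exp (-Complex.I * (((k.1 : ℝ) * θ.1 + (k.2 : ℝ) * θ.2 : ℝ) : ℂ))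

/-- The dual objective `J(q)`, real-valued on the feasible set. -/
def Jdual (n₁ n₂ N₁ N₂ : ℕ) (σ : ℤ × ℤ → ℂ) (Ψ : ℕ × ℕ → ℝ) (q : ℤ × ℤ → ℂ) : ℝ :=
  (∑ k ∈ Lam n₁ n₂, q k * starRingEnd ℂ (σ k)).re -
    (1 / ((N₁ : ℝ) * (N₂ : ℝ))) * ∑ ℓ ∈ gridN N₁ N₂,
      Real.log (1 / Ψ ℓ + (trigQ n₁ n₂ q (zeta N₁ N₂ ℓ)).re)

/-- Membership in the feasible set `ℒ₊`. -/
def Feas (n₁ n₂ N₁ N₂ : ℕ) (Ψ : ℕ × ℕ → ℝ) (q : ℤ × ℤ → ℂ) : Prop :=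
  ConjSym n₁ n₂ q ∧
    ∀ ℓ ∈ gridN N₁ N₂, 0 < 1 / Ψ ℓ + (trigQ n₁ n₂ q (zeta N₁ N₂ ℓ)).re

/-- The discrete Itakura–Saito pseudodistance between `Φ` and `Ψ` on the grid. -/
def DIS (N₁ N₂ : ℕ) (Φ Ψ : ℕ × ℕ → ℝ) : ℝ :=
  (1 / ((N₁ : ℝ) * (N₂ : ℝ))) *
    ∑ ℓ ∈ gridN N₁ N₂, (Real.log (Ψ ℓ / Φ ℓ) + (Φ ℓ - Ψ ℓ) / Ψ ℓ)

/-- `Φ` satisfies the moment equations for covariance data `σ`. -/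
def MomentEq (n₁ n₂ N₁ N₂ : ℕ) (σ : ℤ × ℤ → ℂ) (Φ : ℕ × ℕ → ℝ) : Prop :=
  ∀ k ∈ Lam n₁ n₂,
    σ k = ((1 / ((N₁ : ℝ) * (N₂ : ℝ)) : ℝ) : ℂ) * ∑ ℓ ∈ gridN N₁ N₂,
      Complex.exp (Complex.I *
        (((k.1 : ℝ) * (zeta N₁ N₂ ℓ).1 + (k.2 : ℝ) * (zeta N₁ N₂ ℓ).2 : ℝ) : ℂ)) *
        ((Φ ℓ : ℝ) : ℂ)

/-- The spectrum `Φ̂ = (Ψ⁻¹ + Q̂)⁻¹` associated with dual variable `q`. -/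
def PhiHat (n₁ n₂ N₁ N₂ : ℕ) (Ψ : ℕ × ℕ → ℝ) (q : ℤ × ℤ → ℂ) : ℕ × ℕ → ℝ :=
  fun ℓ => 1 / (1 / Ψ ℓ + (trigQ n₁ n₂ q (zeta N₁ N₂ ℓ)).re)

/-! Write `bᵢ(ℓ) = 1/Ψ(ℓ) + Q̂ᵢ(ζ_ℓ) > 0`, so that `Φ̂ᵢ = 1/bᵢ`. Subtracting the two moment
equations, `Φ̂₁ - Φ̂₂` is orthogonal on the grid to every character `e^{i⟨k,·⟩}`, `k ∈ Λ`, and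
since `Λ = -Λ` also to every trigonometric polynomial supported on `Λ`, in particular to
`Q̂₁ - Q̂₂ = b₁ - b₂`. But `(b₁ - b₂)(1/b₁ - 1/b₂) = -(b₁ - b₂)²/(b₁b₂) ≤ 0` pointwise, so
`b₁ = b₂` on the grid. Hence the real trigonometric polynomial `Q̂₁ - Q̂₂` vanishes on the grid,
and fineness of the grid forces `q̂₁ = q̂₂`. -/

lemma neg_mem_Lam {n₁ n₂ : ℕ} {k : ℤ × ℤ} (hk : k ∈ Lam n₁ n₂) : -k ∈ Lam n₁ n₂ := by
  simp only [Lam, Finset.mem_product, Finset.mem_Icc, Prod.fst_neg, Prod.snd_neg] at *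
  omega

lemma trigQ_sub (n₁ n₂ : ℕ) (q₁ q₂ : ℤ × ℤ → ℂ) (θ : ℝ × ℝ) :
    trigQ n₁ n₂ (q₁ - q₂) θ = trigQ n₁ n₂ q₁ θ - trigQ n₁ n₂ q₂ θ := by
  simp only [trigQ, Pi.sub_apply, sub_mul, Finset.sum_sub_distrib]

lemma ConjSym.sub {n₁ n₂ : ℕ} {q₁ q₂ : ℤ × ℤ → ℂ} (h₁ : ConjSym n₁ n₂ q₁)
    (h₂ : ConjSym n₁ n₂ q₂) : ConjSym n₁ n₂ (q₁ - q₂) := fun k hk => by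
  simp only [Pi.sub_apply, h₁ k hk, h₂ k hk, map_sub]

lemma ConjSym.conj_trigQ {n₁ n₂ : ℕ} {q : ℤ × ℤ → ℂ} (hq : ConjSym n₁ n₂ q) (θ : ℝ × ℝ) :
    starRingEnd ℂ (trigQ n₁ n₂ q θ) = trigQ n₁ n₂ q θ := by
  rw [trigQ, map_sum]
  refine Finset.sum_nbij' (fun k => -k) (fun k => -k) (fun k hk => neg_mem_Lam hk)
    (fun k hk => neg_mem_Lam hk) (by simp) (by simp) fun k hk => ?_
  rw [map_mul, ← hq k hk, ← Complex.exp_conj, map_mul, map_neg, Complex.conj_I,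
    Complex.conj_ofReal]
  congr 2
  simp only [Prod.fst_neg, Prod.snd_neg]
  push_cast
  ring

lemma ConjSym.trigQ_im_eq_zero {n₁ n₂ : ℕ} {q : ℤ × ℤ → ℂ} (hq : ConjSym n₁ n₂ q)
    (θ : ℝ × ℝ) : (trigQ n₁ n₂ q θ).im = 0 :=
  Complex.conj_eq_iff_im.mp (hq.conj_trigQ θ)

lemma MomentEq.sum_sub_eq_zero {n₁ n₂ N₁ N₂ : ℕ} (hN₁ : 0 < N₁) (hN₂ : 0 < N₂)
    {σ : ℤ × ℤ → ℂ} {Φ₁ Φ₂ : ℕ × ℕ → ℝ} (h₁ : MomentEq n₁ n₂ N₁ N₂ σ Φ₁)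
    (h₂ : MomentEq n₁ n₂ N₁ N₂ σ Φ₂) :
    ∀ k ∈ Lam n₁ n₂, ∑ ℓ ∈ gridN N₁ N₂,
      Complex.exp (Complex.I *
        (((k.1 : ℝ) * (zeta N₁ N₂ ℓ).1 + (k.2 : ℝ) * (zeta N₁ N₂ ℓ).2 : ℝ) : ℂ)) *
        ((Φ₁ ℓ - Φ₂ ℓ : ℝ) : ℂ) = 0 := by
  intro k hk
  have hc : ((1 / ((N₁ : ℝ) * (N₂ : ℝ)) : ℝ) : ℂ) ≠ 0 := by
    rw [Complex.ofReal_ne_zero]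
    positivity
  have h := (h₁ k hk).symm.trans (h₂ k hk)
  rw [mul_right_inj' hc] at h
  simp only [Complex.ofReal_sub, mul_sub, Finset.sum_sub_distrib, h, sub_self]

lemma sum_trigQ_mul_eq_zero {ι : Type*} {n₁ n₂ : ℕ} (q : ℤ × ℤ → ℂ) {s : Finset ι}
    {θ : ι → ℝ × ℝ} {f : ι → ℂ}
    (hf : ∀ k ∈ Lam n₁ n₂, ∑ i ∈ s,
      Complex.exp (Complex.I * (((k.1 : ℝ) * (θ i).1 + (k.2 : ℝ) * (θ i).2 : ℝ) : ℂ)) * f i = 0) :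
    ∑ i ∈ s, trigQ n₁ n₂ q (θ i) * f i = 0 := by
  simp only [trigQ, Finset.sum_mul]
  rw [Finset.sum_comm]
  refine Finset.sum_eq_zero fun k hk => ?_
  calc ∑ i ∈ s, q k * Complex.exp (-Complex.I *
          (((k.1 : ℝ) * (θ i).1 + (k.2 : ℝ) * (θ i).2 : ℝ) : ℂ)) * f i
      = q k * ∑ i ∈ s, Complex.exp (Complex.I *
          ((((-k).1 : ℝ) * (θ i).1 + ((-k).2 : ℝ) * (θ i).2 : ℝ) : ℂ)) * f i := by
        rw [Finset.mul_sum]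
        refine Finset.sum_congr rfl fun i _ => ?_
        simp only [Prod.fst_neg, Prod.snd_neg]
        push_cast
        ring_nf
    _ = 0 := by rw [hf (-k) (neg_mem_Lam hk), mul_zero]

lemma sub_mul_one_div_sub_one_div {a b : ℝ} (ha : a ≠ 0) (hb : b ≠ 0) :
    (a - b) * (1 / a - 1 / b) = -((a - b) ^ 2 / (a * b)) := by
  field_simp
  ring

lemma eq_of_sum_sub_mul_one_div_sub_eq_zero {ι : Type*} {s : Finset ι} {a b : ι → ℝ}
    (ha : ∀ i ∈ s, 0 < a i) (hb : ∀ i ∈ s, 0 < b i)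
    (h : ∑ i ∈ s, (a i - b i) * (1 / a i - 1 / b i) = 0) : ∀ i ∈ s, a i = b i := by
  have hterm : ∀ i ∈ s, (a i - b i) * (1 / a i - 1 / b i) = -((a i - b i) ^ 2 / (a i * b i)) :=
    fun i hi => sub_mul_one_div_sub_one_div (ha i hi).ne' (hb i hi).ne'
  have hnonpos : ∀ i ∈ s, (a i - b i) * (1 / a i - 1 / b i) ≤ 0 := fun i hi => by
    have := ha i hi
    have := hb i hi
    rw [hterm i hi, neg_nonpos]
    positivity
  intro i hi
  have hzero := (Finset.sum_eq_zero_iff_of_nonpos hnonpos).mp h i hi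
  rw [hterm i hi, neg_eq_zero, div_eq_zero_iff, sq_eq_zero_iff, sub_eq_zero] at hzero
  exact hzero.resolve_right (mul_pos (ha i hi) (hb i hi)).ne'

theorem stmt13_general (n₁ n₂ N₁ N₂ : ℕ)
    (hN₁ : 0 < N₁) (hN₂ : 0 < N₂)
    (σ : ℤ × ℤ → ℂ)
    (Ψ : ℕ × ℕ → ℝ)
    -- the grid is fine enough: a conjugate-symmetric trigonometric polynomial
    -- vanishing on the whole grid has zero coefficients
    (hfine : ∀ q : ℤ × ℤ → ℂ, ConjSym n₁ n₂ q →
      (∀ ℓ ∈ gridN N₁ N₂, trigQ n₁ n₂ q (zeta N₁ N₂ ℓ) = 0) →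
      ∀ k ∈ Lam n₁ n₂, q k = 0)
    (qhat₁ qhat₂ : ℤ × ℤ → ℂ)
    (hqhat₁ : Feas n₁ n₂ N₁ N₂ Ψ qhat₁) (hqhat₂ : Feas n₁ n₂ N₁ N₂ Ψ qhat₂)
    (hmom₁ : MomentEq n₁ n₂ N₁ N₂ σ (PhiHat n₁ n₂ N₁ N₂ Ψ qhat₁))
    (hmom₂ : MomentEq n₁ n₂ N₁ N₂ σ (PhiHat n₁ n₂ N₁ N₂ Ψ qhat₂)) :
    ∀ k ∈ Lam n₁ n₂, qhat₁ k = qhat₂ k := by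
  obtain ⟨hcs₁, hpos₁⟩ := hqhat₁
  obtain ⟨hcs₂, hpos₂⟩ := hqhat₂
  set b₁ := fun ℓ => 1 / Ψ ℓ + (trigQ n₁ n₂ qhat₁ (zeta N₁ N₂ ℓ)).re
  set b₂ := fun ℓ => 1 / Ψ ℓ + (trigQ n₁ n₂ qhat₂ (zeta N₁ N₂ ℓ)).re
  have hre : ∀ ℓ, (trigQ n₁ n₂ (qhat₁ - qhat₂) (zeta N₁ N₂ ℓ)).re = b₁ ℓ - b₂ ℓ := fun ℓ => by
    simp only [b₁, b₂, trigQ_sub, Complex.sub_re]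
    ring
  have horth :=
    sum_trigQ_mul_eq_zero (qhat₁ - qhat₂) (MomentEq.sum_sub_eq_zero hN₁ hN₂ hmom₁ hmom₂)
  have hb : ∀ ℓ ∈ gridN N₁ N₂, b₁ ℓ = b₂ ℓ := by
    have horth_re := congrArg Complex.re horth
    simp only [Complex.re_sum, Complex.re_mul_ofReal, hre, Complex.zero_re] at horth_re
    exact eq_of_sum_sub_mul_one_div_sub_eq_zero hpos₁ hpos₂ horth_re
  have hQ : ∀ ℓ ∈ gridN N₁ N₂, trigQ n₁ n₂ (qhat₁ - qhat₂) (zeta N₁ N₂ ℓ) = 0 := fun ℓ hℓ =>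
    Complex.ext (by rw [hre, hb ℓ hℓ, sub_self, Complex.zero_re])
      ((hcs₁.sub hcs₂).trigQ_im_eq_zero _)
  intro k hk
  exact sub_eq_zero.mp (hfine _ (hcs₁.sub hcs₂) hQ k hk)

theorem stmt13 (n₁ n₂ N₁ N₂ : ℕ) (hn₁ : 0 < n₁) (hn₂ : 0 < n₂)
    (hN₁ : 0 < N₁) (hN₂ : 0 < N₂)
    (σ : ℤ × ℤ → ℂ) (hσ : ConjSym n₁ n₂ σ)
    (Ψ : ℕ × ℕ → ℝ) (hΨ : ∀ ℓ ∈ gridN N₁ N₂, 0 < Ψ ℓ)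
    -- the grid is fine enough: a conjugate-symmetric trigonometric polynomial
    -- vanishing on the whole grid has zero coefficients
    (hfine : ∀ q : ℤ × ℤ → ℂ, ConjSym n₁ n₂ q →
      (∀ ℓ ∈ gridN N₁ N₂, trigQ n₁ n₂ q (zeta N₁ N₂ ℓ) = 0) →
      ∀ k ∈ Lam n₁ n₂, q k = 0)
    (qhat₁ qhat₂ : ℤ × ℤ → ℂ)
    (hqhat₁ : Feas n₁ n₂ N₁ N₂ Ψ qhat₁) (hqhat₂ : Feas n₁ n₂ N₁ N₂ Ψ qhat₂)
    (hmom₁ : MomentEq n₁ n₂ N₁ N₂ σ (PhiHat n₁ n₂ N₁ N₂ Ψ qhat₁))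
    (hmom₂ : MomentEq n₁ n₂ N₁ N₂ σ (PhiHat n₁ n₂ N₁ N₂ Ψ qhat₂)) :
    ∀ k ∈ Lam n₁ n₂, qhat₁ k = qhat₂ k :=
  stmt13_general n₁ n₂ N₁ N₂ hN₁ hN₂ σ Ψ hfine qhat₁ qhat₂ hqhat₁ hqhat₂ hmom₁ hmom₂

end
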